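/- Let A be a PC(η)-axial algebra and let a and b be primitive axes of A. Then the subalgebra of A generated by a and b is equal to the linear span of a, b, and ab; in particular it has dimension at most 3. -/

import Mathlib

open Submodule

variable {F : Type*} [Field F] {A : Type*} [NonUnitalNonAssocCommRing A]
  [Module F A] [SMulCommClass F A A] [IsScalarTower F A A]

variable (F) in
/-- The `lam`-eigenspace of the adjoint map of `a`. -/
def PCeig (a : A) (lam : F) : Submodule F A where
  carrier := {x : A | a * x = lam • x}
  add_mem' := by
    intro x y hx hy
    simp only [Set.mem_setOf_eq] at hx hy ⊢
    rw [mul_add, hx, hy, smul_add]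
  zero_mem' := by simp
  smul_mem' := by
    intro c x hx
    simp only [Set.mem_setOf_eq] at hx ⊢
    rw [mul_smul_comm, hx, smul_smul, smul_smul, mul_comm]

variable (F) in
/-- The fusion law `PC(η)` for an idempotent (axis) `a`. -/
structure IsPCAxis (η : F) (a : A) : Prop where
  idem : a * a = a
  decomp : PCeig F a 1 ⊔ PCeig F a η ⊔ PCeig F a (1/2 : F) = ⊤
  fus11 : ∀ x ∈ PCeig F a 1, ∀ y ∈ PCeig F a 1, x * y ∈ PCeig F a 1
  fus1e : ∀ x ∈ PCeig F a 1, ∀ y ∈ PCeig F a η, x * y ∈ PCeig F a η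
  fus1h : ∀ x ∈ PCeig F a 1, ∀ y ∈ PCeig F a (1/2 : F), x * y ∈ PCeig F a (1/2 : F)
  fusee : ∀ x ∈ PCeig F a η, ∀ y ∈ PCeig F a η, x * y ∈ PCeig F a 1
  fuseh : ∀ x ∈ PCeig F a η, ∀ y ∈ PCeig F a (1/2 : F), x * y ∈ PCeig F a (1/2 : F)
  fushh : ∀ x ∈ PCeig F a (1/2 : F), ∀ y ∈ PCeig F a (1/2 : F),
    x * y ∈ PCeig F a 1 ⊔ PCeig F a η

variable (F) in
/-- A primitive axis: an axis with `A_1(a) = F·a` (one-dimensional). -/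
def IsPrimPCAxis (η : F) (a : A) : Prop :=
  IsPCAxis F η a ∧ a ≠ 0 ∧ PCeig F a 1 = Submodule.span F {a}

variable (F A) in
/-- A `PC(η)`-axial algebra: generated, as a non-unital algebra, by a (nonempty) set of axes. -/
def IsPCAxialAlgebra (η : F) : Prop :=
  ∃ X : Set A, X.Nonempty ∧ (∀ a ∈ X, IsPCAxis F η a) ∧
    NonUnitalAlgebra.adjoin F X = ⊤

variable (F A) in
/-- A primitive `PC(η)`-axial algebra: generated by a (nonempty) set of primitive axes. -/
def IsPrimPCAxialAlgebra (η : F) : Prop :=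
  ∃ X : Set A, X.Nonempty ∧ (∀ a ∈ X, IsPrimPCAxis F η a) ∧
    NonUnitalAlgebra.adjoin F X = ⊤

lemma mem_PCeig {a x : A} {lam : F} : x ∈ PCeig F a lam ↔ a * x = lam • x := Iff.rfl

/-- Directness of the eigenspace decomposition at the `1/2`-eigenspace. -/
lemma PCeig_disjoint {η : F} (h2 : (2 : F) ≠ 0) (hη1 : η ≠ 1) (hηh : η ≠ 1 / 2)
    {a x : A} (hx : x ∈ PCeig F a 1 ⊔ PCeig F a η)
    (hx' : x ∈ PCeig F a (1/2 : F)) : x = 0 := by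
  obtain ⟨u, hu, v, hv, rfl⟩ := Submodule.mem_sup.mp hx
  rw [mem_PCeig] at hu hv
  rw [mem_PCeig, mul_add, hu, hv, one_smul] at hx'
  -- hx' : u + η•v = (1/2)•(u+v)
  have h2' : ((2:F))⁻¹ * 2 = 1 := inv_mul_cancel₀ h2
  have huv : u = ((1:F) - 2*η) • v := by
    linear_combination (norm := match_scalars <;> (field_simp [h2]; try ring)) (2:F) • hx' 
  have hu0 : u = 0 := by
    have h1 : a * u = η • u := by
      rw [huv, mul_smul_comm, hv, smul_smul, smul_smul, mul_comm]
    rw [hu, one_smul] at h1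
    have : ((1:F) - η) • u = 0 := by
      rw [sub_smul, one_smul, ← h1, sub_self]
    rcases smul_eq_zero.mp this with h | h
    · exact absurd (by linear_combination -h : η = 1) hη1
    · exact h
  have hv0 : v = 0 := by
    rw [hu0] at huv
    rcases smul_eq_zero.mp huv.symm with h | h
    · exact absurd (by field_simp; linear_combination -h : η = 1/2) hηh
    · exact h
  rw [hu0, hv0, add_zero]

/-- the subalgebra generated by two primitive axes `a`, `b` of a `PC(η)`-axial
algebra is the linear span of `a`, `b`, `ab`; in particular it has dimension at most 3. -/
theorem stmt3 (η : F) (h2 : (2 : F) ≠ 0) (hη1 : η ≠ 1) (hηh : η ≠ 1 / 2)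
    (hA : IsPCAxialAlgebra F A η)
    (a b : A) (ha : IsPrimPCAxis F η a) (hb : IsPrimPCAxis F η b) :
    (NonUnitalAlgebra.adjoin F ({a, b} : Set A)).toSubmodule =
      Submodule.span F ({a, b, a * b} : Set A) ∧
    Module.rank F ↥(NonUnitalAlgebra.adjoin F ({a, b} : Set A)) ≤ 3 := by
  obtain ⟨haPC, ha0, ha1⟩ := ha
  obtain ⟨hbPC, hb0, hb1⟩ := hb
  -- decompose b with respect to a
  have hb_top : b ∈ PCeig F a 1 ⊔ PCeig F a η ⊔ PCeig F a (1/2 : F) := by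
    rw [haPC.decomp]; trivial
  obtain ⟨y, hy, q, hq, hyq⟩ := Submodule.mem_sup.mp hb_top
  obtain ⟨x1, hx1, p, hp, hxp⟩ := Submodule.mem_sup.mp hy
  rw [ha1] at hx1
  obtain ⟨β, hβ⟩ := Submodule.mem_span_singleton.mp hx1
  have hbdef : b = β • a + p + q := by rw [← hyq, ← hxp, hβ]
  have haa : a * a = a := haPC.idem
  have hap : a * p = η • p := hp
  have haq : a * q = (1/2 : F) • q := hq
  have hamem : a ∈ PCeig F a 1 := by rw [mem_PCeig, haa, one_smul]
  -- p * p is a multiple of a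
  obtain ⟨γ, hγ⟩ := Submodule.mem_span_singleton.mp (ha1 ▸ haPC.fusee p hp p hp)
  have hpp : p * p = γ • a := hγ.symm
  have hpq' : p * q ∈ PCeig F a (1/2 : F) := haPC.fuseh p hp q hq
  have hqq' : q * q ∈ PCeig F a 1 ⊔ PCeig F a η := haPC.fushh q hq q hq
  -- expand b * b = b
  have key : (β*β) • a + γ • a + (2*β*η) • p + β • q + q*q + (2:F) • (p*q)
      = β • a + p + q := by
    have e : (β • a + p + q) * (β • a + p + q)
        = (β*β) • a + γ • a + (2*β*η) • p + β • q + q*q + (2:F) • (p*q) := by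
      simp only [mul_add, add_mul, smul_mul_assoc, mul_smul_comm,
        mul_comm p a, mul_comm q a, mul_comm q p, haa, hap, haq, hpp]
      match_scalars <;> (field_simp [h2]; try ring)
    calc (β*β) • a + γ • a + (2*β*η) • p + β • q + q*q + (2:F) • (p*q)
        = (β • a + p + q) * (β • a + p + q) := e.symm
      _ = b * b := by rw [← hbdef]
      _ = b := hbPC.idem
      _ = β • a + p + q := hbdef
  -- separate the components using directness
  have hw : (2:F) • (p*q) - ((1:F) - β) • q = 0 := by
    apply PCeig_disjoint h2 hη1 hηh (a := a)
    · have hmem : (2:F) • (p*q) - ((1:F) - β) • q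
          = ((β - β*β - γ) • a + ((1:F) - 2*β*η) • p) - q*q := by
        linear_combination (norm := module) key
      rw [hmem]
      exact sub_mem (add_mem (Submodule.mem_sup_left (Submodule.smul_mem _ _ hamem))
        (Submodule.mem_sup_right (Submodule.smul_mem _ _ hp))) hqq'
    · exact sub_mem (Submodule.smul_mem _ _ hpq') (Submodule.smul_mem _ _ hq)
  have h2pq : (2:F) • (p*q) = ((1:F) - β) • q := by
    rw [← sub_eq_zero]; exact hw
  have hpq : p * q = ((2:F)⁻¹ * ((1:F) - β)) • q := by
    calc p * q = (2:F)⁻¹ • ((2:F) • (p*q)) := by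
          rw [smul_smul, inv_mul_cancel₀ h2, one_smul]
      _ = (2:F)⁻¹ • (((1:F) - β) • q) := by rw [h2pq]
      _ = ((2:F)⁻¹ * ((1:F) - β)) • q := by rw [smul_smul]
  have hqq : q * q = (β - β*β - γ) • a + ((1:F) - 2*β*η) • p := by
    have e : q*q = β • a + p + q
        - ((β*β) • a + γ • a + (2*β*η) • p + β • q + (2:F) • (p*q)) := by
      linear_combination (norm := module) key
    rw [e, h2pq]
    module
  -- the span of {a, p, q} is closed under multiplication
  set s : Set A := {a, p, q} with hs
  have hamem' : a ∈ span F s := subset_span (by simp [hs])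
  have hpmem' : p ∈ span F s := subset_span (by simp [hs])
  have hqmem' : q ∈ span F s := subset_span (by simp [hs])
  have hgen : ∀ x ∈ s, ∀ y ∈ s, x * y ∈ span F s := by
    rintro x (rfl | rfl | rfl) y (rfl | rfl | rfl)
    · rw [haa]; exact hamem'
    · rw [hap]; exact smul_mem _ _ hpmem'
    · rw [haq]; exact smul_mem _ _ hqmem'
    · rw [mul_comm, hap]; exact smul_mem _ _ hpmem'
    · rw [hpp]; exact smul_mem _ _ hamem'
    · rw [hpq]; exact smul_mem _ _ hqmem'
    · rw [mul_comm, haq]; exact smul_mem _ _ hqmem'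
    · rw [mul_comm, hpq]; exact smul_mem _ _ hqmem'
    · rw [hqq]; exact add_mem (smul_mem _ _ hamem') (smul_mem _ _ hpmem')
  have hclosed : ∀ x y : A, x ∈ span F s → y ∈ span F s → x * y ∈ span F s := by
    intro x y hx hy
    refine Submodule.span_induction₂ (p := fun x y _ _ => x * y ∈ span F s)
      (fun x y hx hy => hgen x hx y hy) ?_ ?_ ?_ ?_ ?_ ?_ hx hy
    · intro y _; rw [zero_mul]; exact zero_mem _
    · intro x _; rw [mul_zero]; exact zero_mem _
    · intro x y z _ _ _ h1 h2; rw [add_mul]; exact add_mem h1 h2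
    · intro x y z _ _ _ h1 h2; rw [mul_add]; exact add_mem h1 h2
    · intro r x y _ _ h; rw [smul_mul_assoc]; exact smul_mem _ _ h
    · intro r x y _ _ h; rw [mul_smul_comm]; exact smul_mem _ _ h
  have hab : a * b = β • a + η • p + (1/2 : F) • q := by
    rw [hbdef]
    simp only [mul_add, mul_smul_comm, haa, hap, haq]
  have hbmem' : b ∈ span F s := by
    rw [hbdef]; exact add_mem (add_mem (smul_mem _ _ hamem') hpmem') hqmem'
  have habmem' : a * b ∈ span F s := by
    rw [hab]
    exact add_mem (add_mem (smul_mem _ _ hamem') (smul_mem _ _ hpmem')) (smul_mem _ _ hqmem')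
  -- span {a, b, a*b} = span {a, p, q}
  have hspan_eq : span F ({a, b, a*b} : Set A) = span F s := by
    apply le_antisymm
    · rw [Submodule.span_le]
      rintro z (rfl | rfl | rfl)
      · exact hamem'
      · exact hbmem'
      · exact habmem'
    · rw [Submodule.span_le]
      have hamem2 : a ∈ span F ({a, b, a*b} : Set A) := subset_span (by simp)
      have hbmem2 : b ∈ span F ({a, b, a*b} : Set A) := subset_span (by simp)
      have habmem2 : a * b ∈ span F ({a, b, a*b} : Set A) := subset_span (by simp)
      have hne1 : η - 1/2 ≠ 0 := sub_ne_zero.mpr hηh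
      have hne2 : (1/2 : F) - η ≠ 0 := sub_ne_zero.mpr (Ne.symm hηh)
      have hpmem2 : p ∈ span F ({a, b, a*b} : Set A) := by
        have e : (η - 1/2) • p = a * b - (1/2 : F) • b - (β * (1/2 : F)) • a := by
          rw [hab, hbdef]
          match_scalars <;> (field_simp [h2]; try ring)
        have : p = (η - 1/2)⁻¹ • ((η - 1/2) • p) := by
          rw [smul_smul, inv_mul_cancel₀ hne1, one_smul]
        rw [this, e]
        exact smul_mem _ _ (sub_mem (sub_mem habmem2 (smul_mem _ _ hbmem2))
          (smul_mem _ _ hamem2))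
      have hqmem2 : q ∈ span F ({a, b, a*b} : Set A) := by
        have e : ((1/2 : F) - η) • q = a * b - η • b - (β - β*η) • a := by
          rw [hab, hbdef]; module
        have : q = ((1/2 : F) - η)⁻¹ • (((1/2 : F) - η) • q) := by
          rw [smul_smul, inv_mul_cancel₀ hne2, one_smul]
        rw [this, e]
        exact smul_mem _ _ (sub_mem (sub_mem habmem2 (smul_mem _ _ hbmem2))
          (smul_mem _ _ hamem2))
      rintro z (rfl | rfl | rfl)
      · exact hamem2
      · exact hpmem2
      · exact hqmem2
  -- the subalgebra structure on span F s
  let S : NonUnitalSubalgebra F A := (span F s).toNonUnitalSubalgebra hclosed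
  have hadj_le : NonUnitalAlgebra.adjoin F ({a, b} : Set A) ≤ S := by
    apply NonUnitalAlgebra.adjoin_le
    rintro z (rfl | rfl)
    · exact hamem'
    · exact hbmem'
  have hle_adj : span F ({a, b, a*b} : Set A)
      ≤ (NonUnitalAlgebra.adjoin F ({a, b} : Set A)).toSubmodule := by
    rw [Submodule.span_le]
    rintro z (rfl | rfl | rfl)
    · exact NonUnitalAlgebra.subset_adjoin F (by simp)
    · exact NonUnitalAlgebra.subset_adjoin F (by simp)
    · show a * b ∈ NonUnitalAlgebra.adjoin F ({a, b} : Set A)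
      exact mul_mem (NonUnitalAlgebra.subset_adjoin F (by simp : a ∈ ({a,b} : Set A)))
        (NonUnitalAlgebra.subset_adjoin F (by simp : b ∈ ({a,b} : Set A)))
  have hmain : (NonUnitalAlgebra.adjoin F ({a, b} : Set A)).toSubmodule
      = Submodule.span F ({a, b, a * b} : Set A) := by
    apply le_antisymm
    · intro z hz
      rw [hspan_eq]
      exact hadj_le hz
    · exact hle_adj
  refine ⟨hmain, ?_⟩
  -- rank bound
  have hcard : Cardinal.mk ({a, b, a*b} : Set A) ≤ 3 := by
    refine (Cardinal.mk_insert_le).trans ?_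
    refine (add_le_add_left (Cardinal.mk_insert_le) 1).trans ?_
    rw [Cardinal.mk_singleton]
    norm_num
  have hrank : Module.rank F (span F ({a, b, a*b} : Set A)) ≤ 3 :=
    (rank_span_le _).trans hcard
  have : Module.rank F (NonUnitalAlgebra.adjoin F ({a, b} : Set A)).toSubmodule ≤ 3 := by
    rw [hmain]; exact hrank
  exact this
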